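/- Under the setting and positivity assumptions of the robust multiview covariate shift classifier (views V_g, V_o, projections π_v, features φ_v, ratios ρ_v(x) = p_train(π_v x)/p_test(π_v x), ρ(x) = p_train(x)/p_test(x), r_v(x) = ρ_v(x)/ρ(x), and softmax model P̂_θ(y|x) ∝ exp(∑_{v∈V_g} ρ_v(x) θ_v·φ_v(π_v x, y) + ρ(x) ∑_{v'∈V_o} θ_{v'}·φ_{v'}(π_{v'} x, y))), the function L(θ) = ∑_{x,y} p_test(x) p(y|x) log P̂_θ(y|x) is differentiable in θ and its gradient with respect to the block θ_v, for v ∈ V_g, equals ∑_{x,y} p_train(x) p(y|x) r_v(x) φ_v(π_v x, y) − ∑_x p_train(x) r_v(x) ∑_y P̂_θ(y|x) φ_v(π_v x, y), while its gradient with respect to θ_{v'}, for v' ∈ V_o, equals ∑_{x,y} p_train(x) p(y|x) φ_{v'}(π_{v'} x, y) − ∑_x p_train(x) ∑_y P̂_θ(y|x) φ_{v'}(π_{v'} x, y). In particular, the gradient depends only on training-distribution expectations (of reweighted features for generalized views and unweighted features for non-generalized views). -/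

import Mathlib

open Finset

/-! The log-likelihood is a `p_test`-weighted sum of log-softmax terms whose scores are linear in
`θ`, and the derivative of `log softmax_y` is the derivative of the score of `y` minus its softmax
average. Along a coordinate of a generalized view `v` the score moves by `ρ_v(x) φ_v`, along a
coordinate of a non-generalized view by `ρ(x) φ_v'`; since `p_test ρ_v = p_train r_v` and
`p_test ρ = p_train`, the test-weighted moments become training-weighted ones. -/

noncomputable section

def softmax {ι : Type*} [Fintype ι] (a : ι → ℝ) (j : ι) : ℝ :=
  Real.exp (a j) / ∑ i, Real.exp (a i)

section Softmax

variable {ι E : Type*} [Fintype ι] [Nonempty ι] [NormedAddCommGroup E] [NormedSpace ℝ E]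

theorem sum_exp_pos (a : ι → ℝ) : 0 < ∑ i, Real.exp (a i) :=
  sum_pos (fun _ _ => Real.exp_pos _) univ_nonempty

theorem log_softmax (a : ι → ℝ) (j : ι) :
    Real.log (softmax a j) = a j - Real.log (∑ i, Real.exp (a i)) := by
  rw [softmax, Real.log_div (Real.exp_ne_zero _) (sum_exp_pos a).ne', Real.log_exp]

theorem hasFDerivAt_log_sum_exp (s : ι → E →L[ℝ] ℝ) (θ : E) :
    HasFDerivAt (fun θ => Real.log (∑ i, Real.exp (s i θ)))
      (∑ i, softmax (fun i => s i θ) i • s i) θ := by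
  convert (HasFDerivAt.fun_sum fun i _ => (s i).hasFDerivAt.exp).log
    (sum_exp_pos fun i => s i θ).ne' using 1
  simp only [softmax, div_eq_inv_mul, mul_smul, smul_sum]

theorem hasFDerivAt_log_softmax (s : ι → E →L[ℝ] ℝ) (θ : E) (j : ι) :
    HasFDerivAt (fun θ => Real.log (softmax (fun i => s i θ) j))
      (s j - ∑ i, softmax (fun i => s i θ) i • s i) θ := by
  simp only [log_softmax]
  exact (s j).hasFDerivAt.sub (hasFDerivAt_log_sum_exp s θ)

end Softmax

section ExpectedLogSoftmax

variable {X Y E : Type*} [Fintype X] [Fintype Y] [Nonempty Y]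
  [NormedAddCommGroup E] [NormedSpace ℝ E]

theorem hasFDerivAt_sum_mul_log_softmax (w : X → Y → ℝ) (s : X → Y → E →L[ℝ] ℝ) (θ : E) :
    HasFDerivAt (fun θ => ∑ x, ∑ y, w x y * Real.log (softmax (fun y => s x y θ) y))
      (∑ x, ∑ y, w x y • (s x y - ∑ y', softmax (fun y => s x y θ) y' • s x y')) θ :=
  HasFDerivAt.fun_sum fun x _ => HasFDerivAt.fun_sum fun y _ =>
    (hasFDerivAt_log_softmax (s x) θ y).const_mul (w x y)

theorem fderiv_sum_mul_log_softmax_apply (q : X → ℝ) (p : X → Y → ℝ)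
    (hp : ∀ x, ∑ y, p x y = 1) (s : X → Y → E →L[ℝ] ℝ) (θ e : E) (c : X → ℝ)
    (f : X → Y → ℝ) (hs : ∀ x y, s x y e = c x * f x y) :
    fderiv ℝ (fun θ => ∑ x, ∑ y, q x * p x y * Real.log (softmax (fun y => s x y θ) y)) θ e =
      (∑ x, ∑ y, q x * c x * p x y * f x y) -
        ∑ x, q x * c x * ∑ y, softmax (fun y => s x y θ) y * f x y := by
  rw [(hasFDerivAt_sum_mul_log_softmax _ s θ).fderiv, ← sum_sub_distrib]
  simp only [_root_.sum_apply, smul_apply, sub_apply, smul_eq_mul, hs]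
  refine sum_congr rfl fun x _ => ?_
  set K := ∑ y, softmax (fun y => s x y θ) y * f x y
  have hK : ∑ y, softmax (fun y => s x y θ) y * (c x * f x y) = c x * K := by
    rw [mul_sum]; exact sum_congr rfl fun _ _ => by ring
  calc ∑ y, q x * p x y * (c x * f x y - ∑ y', softmax (fun y => s x y θ) y' * (c x * f x y'))
      = ∑ y, (q x * c x * p x y * f x y - p x y * (q x * c x * K)) :=
        sum_congr rfl fun y _ => by rw [hK]; ring
    _ = ∑ y, q x * c x * p x y * f x y - q x * c x * K := by
        rw [sum_sub_distrib, ← sum_mul, hp x, one_mul]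

end ExpectedLogSoftmax

section BlockDot

variable {V : Type*} [Fintype V] {κ : V → Type*} [∀ v, Fintype (κ v)]

def blockDot (c : (v : V) → κ v → ℝ) : ((v : V) → κ v → ℝ) →L[ℝ] ℝ :=
  ∑ v, ∑ i, c v i • (ContinuousLinearMap.proj (R := ℝ) (φ := fun _ : κ v => ℝ) i).comp
    (ContinuousLinearMap.proj (R := ℝ) (φ := fun v => κ v → ℝ) v)

theorem blockDot_apply (c θ : (v : V) → κ v → ℝ) :
    blockDot c θ = ∑ v, ∑ i, θ v i * c v i := by
  simp [blockDot, mul_comm]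

theorem blockDot_single [DecidableEq V] [∀ v, DecidableEq (κ v)] (c : (v : V) → κ v → ℝ)
    (v : V) (i : κ v) : blockDot c (Pi.single v (Pi.single i 1)) = c v i := by
  rw [blockDot_apply, sum_eq_single v, sum_eq_single i] <;> simp_all

end BlockDot

end

theorem robust_multiview_loglik_gradient_general
    {X Y Vg Vo : Type*} [Fintype X] [Fintype Y] [Fintype Vg] [Fintype Vo]
    [DecidableEq Vg] [DecidableEq Vo] [Nonempty Y]
    (ptrain ptest : X → ℝ)
    (htrain_pos : ∀ x, 0 < ptrain x)
    (htest_pos : ∀ x, 0 < ptest x)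
    (pcond : X → Y → ℝ)
    (hcond_sum : ∀ x, ∑ y, pcond x y = 1)
    -- generalized views
    (Xg : Vg → Type*)
    (πg : (v : Vg) → X → Xg v)
    (dg : Vg → ℕ)
    (φg : (v : Vg) → Xg v → Y → Fin (dg v) → ℝ)
    -- non-generalized views
    (Xo : Vo → Type*)
    (πo : (v : Vo) → X → Xo v)
    (do_ : Vo → ℕ)
    (φo : (v : Vo) → Xo v → Y → Fin (do_ v) → ℝ)
    -- view marginals and density ratios ρ_v, ρ, r_v
    (ρv : Vg → X → ℝ)
    (ρ : X → ℝ) (hρ : ∀ x, ρ x = ptrain x / ptest x)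
    (r : Vg → X → ℝ) (hr : ∀ v x, r v x = ρv v x / ρ x)
    -- softmax model
    (Phat : (((v : Vg) → Fin (dg v) → ℝ) × ((v : Vo) → Fin (do_ v) → ℝ)) →
      X → Y → ℝ)
    (hPhat : ∀ θ x y, Phat θ x y =
      Real.exp ((∑ v, ρv v x * ∑ i, θ.1 v i * φg v (πg v x) y i) +
          ρ x * ∑ v', ∑ i, θ.2 v' i * φo v' (πo v' x) y i) /
        ∑ y', Real.exp ((∑ v, ρv v x * ∑ i, θ.1 v i * φg v (πg v x) y' i) +
          ρ x * ∑ v', ∑ i, θ.2 v' i * φo v' (πo v' x) y' i))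
    -- testing conditional log-likelihood
    (L : (((v : Vg) → Fin (dg v) → ℝ) × ((v : Vo) → Fin (do_ v) → ℝ)) → ℝ)
    (hL : ∀ θ, L θ = ∑ x, ∑ y, ptest x * pcond x y * Real.log (Phat θ x y)) :
    Differentiable ℝ L ∧
      (∀ θ (v : Vg) (i : Fin (dg v)),
        fderiv ℝ L θ (Pi.single v (Pi.single i (1 : ℝ)), 0) =
          (∑ x, ∑ y, ptrain x * pcond x y * r v x * φg v (πg v x) y i) -
            ∑ x, ptrain x * r v x * ∑ y, Phat θ x y * φg v (πg v x) y i) ∧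
      (∀ θ (v' : Vo) (i : Fin (do_ v')),
        fderiv ℝ L θ (0, Pi.single v' (Pi.single i (1 : ℝ))) =
          (∑ x, ∑ y, ptrain x * pcond x y * φo v' (πo v' x) y i) -
            ∑ x, ptrain x * ∑ y, Phat θ x y * φo v' (πo v' x) y i) := by
  set S : X → Y → (((v : Vg) → Fin (dg v) → ℝ) × ((v : Vo) → Fin (do_ v) → ℝ)) →L[ℝ] ℝ :=
    fun x y => (blockDot fun v i => ρv v x * φg v (πg v x) y i).comp (.fst ℝ _ _) +
      ρ x • (blockDot fun v i => φo v (πo v x) y i).comp (.snd ℝ _ _)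
  have hP : ∀ θ x y, Phat θ x y = softmax (fun y => S x y θ) y := by
    intro θ x y
    simp [hPhat, softmax, S, blockDot_apply, mul_sum, mul_left_comm]
  have hL' : L = fun θ =>
      ∑ x, ∑ y, ptest x * pcond x y * Real.log (softmax (fun y => S x y θ) y) := by
    funext θ; simp only [hL, hP]
  refine ⟨hL' ▸ fun θ => (hasFDerivAt_sum_mul_log_softmax _ S θ).differentiableAt,
    fun θ v i => ?_, fun θ v i => ?_⟩
  · have hshift : ∀ x, ptest x * ρv v x = ptrain x * r v x := fun x => by
      rw [hr, hρ]; field_simp [(htrain_pos x).ne', (htest_pos x).ne']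
    rw [hL', fderiv_sum_mul_log_softmax_apply ptest pcond hcond_sum S θ _ (ρv v)
      (fun x y => φg v (πg v x) y i) (fun x y => by simp [S, blockDot_single])]
    simp only [hP, hshift]
    congr 1
    exact sum_congr rfl fun x _ => sum_congr rfl fun y _ => by ring
  · have hshift : ∀ x, ptest x * ρ x = ptrain x := fun x => by
      rw [hρ]; field_simp [(htest_pos x).ne']
    rw [hL', fderiv_sum_mul_log_softmax_apply ptest pcond hcond_sum S θ _ ρ
      (fun x y => φo v (πo v x) y i) (fun x y => by simp [S, blockDot_single])]
    simp only [hP, hshift]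

/-- the testing conditional log-likelihood
`L(θ) = ∑_{x,y} p_test(x) p(y|x) log P̂_θ(y|x)` of the robust multiview
covariate shift classifier is differentiable in `θ = (θg, θo)`, and its
partial derivatives (gradient blocks) are given by training-distribution
expectations: reweighted-feature moment differences for generalized views and
plain moment differences for non-generalized views. -/
theorem robust_multiview_loglik_gradient
    {X Y Vg Vo : Type*} [Fintype X] [Fintype Y] [Fintype Vg] [Fintype Vo]
    [DecidableEq Vg] [DecidableEq Vo] [Nonempty X] [Nonempty Y]
    (ptrain ptest : X → ℝ)
    (htrain_pos : ∀ x, 0 < ptrain x) (htrain_sum : ∑ x, ptrain x = 1)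
    (htest_pos : ∀ x, 0 < ptest x) (htest_sum : ∑ x, ptest x = 1)
    (pcond : X → Y → ℝ)
    (hcond_nonneg : ∀ x y, 0 ≤ pcond x y) (hcond_sum : ∀ x, ∑ y, pcond x y = 1)
    -- generalized views
    (Xg : Vg → Type*) [∀ v, Fintype (Xg v)] [∀ v, DecidableEq (Xg v)]
    (πg : (v : Vg) → X → Xg v)
    (dg : Vg → ℕ)
    (φg : (v : Vg) → Xg v → Y → Fin (dg v) → ℝ)
    -- non-generalized views
    (Xo : Vo → Type*) [∀ v, Fintype (Xo v)] [∀ v, DecidableEq (Xo v)]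
    (πo : (v : Vo) → X → Xo v)
    (do_ : Vo → ℕ)
    (φo : (v : Vo) → Xo v → Y → Fin (do_ v) → ℝ)
    -- view marginals and density ratios ρ_v, ρ, r_v
    (mtrain mtest : (v : Vg) → X → ℝ)
    (hmtrain : ∀ v x, mtrain v x =
      ∑ x' ∈ Finset.univ.filter (fun x' => πg v x' = πg v x), ptrain x')
    (hmtest : ∀ v x, mtest v x =
      ∑ x' ∈ Finset.univ.filter (fun x' => πg v x' = πg v x), ptest x')
    (hmtrain_pos : ∀ v x, 0 < mtrain v x) (hmtest_pos : ∀ v x, 0 < mtest v x)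
    (ρv : Vg → X → ℝ) (hρv : ∀ v x, ρv v x = mtrain v x / mtest v x)
    (ρ : X → ℝ) (hρ : ∀ x, ρ x = ptrain x / ptest x)
    (r : Vg → X → ℝ) (hr : ∀ v x, r v x = ρv v x / ρ x)
    -- softmax model
    (Phat : (((v : Vg) → Fin (dg v) → ℝ) × ((v : Vo) → Fin (do_ v) → ℝ)) →
      X → Y → ℝ)
    (hPhat : ∀ θ x y, Phat θ x y =
      Real.exp ((∑ v, ρv v x * ∑ i, θ.1 v i * φg v (πg v x) y i) +
          ρ x * ∑ v', ∑ i, θ.2 v' i * φo v' (πo v' x) y i) /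
        ∑ y', Real.exp ((∑ v, ρv v x * ∑ i, θ.1 v i * φg v (πg v x) y' i) +
          ρ x * ∑ v', ∑ i, θ.2 v' i * φo v' (πo v' x) y' i))
    -- testing conditional log-likelihood
    (L : (((v : Vg) → Fin (dg v) → ℝ) × ((v : Vo) → Fin (do_ v) → ℝ)) → ℝ)
    (hL : ∀ θ, L θ = ∑ x, ∑ y, ptest x * pcond x y * Real.log (Phat θ x y)) :
    Differentiable ℝ L ∧
      (∀ θ (v : Vg) (i : Fin (dg v)),
        fderiv ℝ L θ (Pi.single v (Pi.single i (1 : ℝ)), 0) =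
          (∑ x, ∑ y, ptrain x * pcond x y * r v x * φg v (πg v x) y i) -
            ∑ x, ptrain x * r v x * ∑ y, Phat θ x y * φg v (πg v x) y i) ∧
      (∀ θ (v' : Vo) (i : Fin (do_ v')),
        fderiv ℝ L θ (0, Pi.single v' (Pi.single i (1 : ℝ))) =
          (∑ x, ∑ y, ptrain x * pcond x y * φo v' (πo v' x) y i) -
            ∑ x, ptrain x * ∑ y, Phat θ x y * φo v' (πo v' x) y i) :=
  robust_multiview_loglik_gradient_general ptrain ptest htrain_pos htest_pos pcond hcond_sum Xg πg
    dg φg Xo πo do_ φo ρv ρ hρ r hr Phat hPhat L hL
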